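/- Let f be 2π-periodic and Lipschitz continuous, with Fourier coefficients c_k = (1/2π) ∫_0^{2π} f(t) e^{-ikt} dt. Then for every N ≥ 1, the periodic trapezoidal rule error satisfies the exact identity I_N − I = 2π Σ_{j ∈ ℤ, j ≠ 0} c_{jN}, where I = ∫_0^{2π} f(t) dt and I_N = (2π/N) Σ_{j=0}^{N−1} f(2πj/N), the series converging absolutely. -/

import Mathlib

open Real

/-- The `k`-th Fourier coefficient `c_k = (1/2π) ∫_0^{2π} f(t) e^{-ikt} dt`
of a `2π`-periodic function `f`. -/
noncomputable def fourierCoefficient (f : ℝ → ℂ) (k : ℤ) : ℂ :=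
  (1 / (2 * (π : ℂ))) * ∫ t in (0 : ℝ)..(2 * π), f t * Complex.exp (-Complex.I * k * t)

/-!
Parseval's identity applied to `f(· + h) - f` gives `∑ₖ |e^{ikh} - 1|² |c_k|² ≤ K² h²`. With
`h = 2π / (3 · 2^m)` every frequency of the dyadic block `2^m < |k| ≤ 2^{m+1}` has
`|e^{ikh} - 1|² ≥ 3`, so the block carries `ℓ²` mass `O(4^{-m})` and, by Cauchy–Schwarz, `ℓ¹` mass
`O(2^{-m/2})`: the coefficients are absolutely summable (Bernstein). The Fourier series then
converges to `f` everywhere, and averaging it over the grid `2πj/N` keeps exactly the frequencies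
divisible by `N`, since `∑_{j<N} e^{2πikj/N}` is `N` or `0`. Hence `I_N / 2π = ∑ₘ c_{mN}`, and the
term `m = 0` is `I / 2π`.
-/

open AddCircle MeasureTheory Finset
open scoped NNReal

noncomputable def dyadicBlock (m : ℕ) : Finset ℤ :=
  Icc (-2 ^ (m + 1)) (2 ^ (m + 1)) \ Icc (-2 ^ m) (2 ^ m)

theorem mem_dyadicBlock {m : ℕ} {n : ℤ} :
    n ∈ dyadicBlock m ↔ 2 ^ m < |n| ∧ |n| ≤ 2 ^ (m + 1) := by
  rw [dyadicBlock, mem_sdiff, mem_Icc, mem_Icc, ← abs_le, ← abs_le, not_le, and_comm]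

theorem card_dyadicBlock_le (m : ℕ) : (#(dyadicBlock m) : ℝ) ≤ 2 ^ (m + 3) := by
  have hcard : #(dyadicBlock m) ≤ 2 ^ (m + 2) + 1 := by
    refine (card_le_card sdiff_subset).trans ?_
    rw [Int.card_Icc, show (2 : ℤ) ^ (m + 1) = ((2 ^ (m + 1) : ℕ) : ℤ) by push_cast; rfl,
      pow_succ 2 (m + 1)]
    omega
  calc (#(dyadicBlock m) : ℝ) ≤ 2 ^ (m + 2) + 1 := by exact_mod_cast hcard
    _ ≤ 2 ^ (m + 3) := by
      rw [pow_succ _ (m + 2)]; linarith [one_le_pow₀ (M₀ := ℝ) (n := m + 2) one_le_two]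

theorem sum_Icc_pow_succ_eq_sum_dyadicBlock_add (a : ℤ → ℝ) (m : ℕ) :
    ∑ n ∈ Icc (-2 ^ (m + 1)) (2 ^ (m + 1)), a n =
      ∑ n ∈ dyadicBlock m, a n + ∑ n ∈ Icc (-2 ^ m) (2 ^ m), a n := by
  refine (sum_sdiff (Icc_subset_Icc ?_ ?_)).symm <;> gcongr <;> norm_num

theorem sum_dyadicBlock_le_of_sum_sq_le {a : ℤ → ℝ} {A : ℝ} (hA : 0 ≤ A) (m : ℕ)
    (h : ∑ n ∈ dyadicBlock m, a n ^ 2 ≤ A / 4 ^ m) :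
    ∑ n ∈ dyadicBlock m, a n ≤ √(8 * A) * √(1 / 2) ^ m := by
  have hsq : (√(8 * A) * √(1 / 2) ^ m) ^ 2 = 2 ^ (m + 3) * (A / 4 ^ m) := by
    rw [mul_pow, ← pow_mul, mul_comm m, pow_mul, Real.sq_sqrt (by positivity),
      Real.sq_sqrt (by positivity), one_div_pow, pow_add,
      show (4 : ℝ) ^ m = 2 ^ m * 2 ^ m by rw [← mul_pow]; norm_num]
    field_simp
    ring
  refine le_of_pow_le_pow_left₀ two_ne_zero (by positivity) ?_
  calc (∑ n ∈ dyadicBlock m, a n) ^ 2 ≤ #(dyadicBlock m) * ∑ n ∈ dyadicBlock m, a n ^ 2 :=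
        sq_sum_le_card_mul_sum_sq
    _ ≤ 2 ^ (m + 3) * (A / 4 ^ m) :=
        mul_le_mul (card_dyadicBlock_le m) h (sum_nonneg fun _ _ => sq_nonneg _) (by positivity)
    _ = _ := hsq.symm

theorem summable_of_sum_dyadicBlock_sq_le {a : ℤ → ℝ} {A : ℝ} (ha : 0 ≤ a) (hA : 0 ≤ A)
    (h : ∀ m, ∑ n ∈ dyadicBlock m, a n ^ 2 ≤ A / 4 ^ m) : Summable a := by
  set r := √(1 / 2)
  have hr : r < 1 := by rw [Real.sqrt_lt' one_pos]; norm_num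
  have hIcc (M : ℕ) : ∑ n ∈ Icc (-2 ^ M) (2 ^ M), a n ≤
      ∑ n ∈ Icc (-1) 1, a n + √(8 * A) * ∑ m ∈ range M, r ^ m := by
    induction M with
    | zero => simp
    | succ M ih =>
      rw [sum_Icc_pow_succ_eq_sum_dyadicBlock_add, sum_range_succ, mul_add]
      linarith [sum_dyadicBlock_le_of_sum_sq_le hA M (h M)]
  refine summable_of_sum_le (c := ∑ n ∈ Icc (-1) 1, a n + √(8 * A) * (1 - r)⁻¹) ha fun u => ?_
  set M := u.sup Int.natAbs
  have hu : u ⊆ Icc (-2 ^ M) (2 ^ M) := fun n hn => by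
    have : n.natAbs < 2 ^ M := (le_sup hn).trans_lt M.lt_two_pow_self
    rw [mem_Icc, ← abs_le, Int.abs_eq_natAbs]
    exact_mod_cast this.le
  calc ∑ n ∈ u, a n ≤ ∑ n ∈ Icc (-2 ^ M) (2 ^ M), a n :=
        sum_le_sum_of_subset_of_nonneg hu fun n _ _ => ha n
    _ ≤ _ := by
        have hgeom : ∑ m ∈ range M, r ^ m ≤ (1 - r)⁻¹ := by
          have := geom_sum_Ico_le_of_lt_one (m := 0) (n := M) (Real.sqrt_nonneg (1 / 2)) hr
          rw [← range_eq_Ico, pow_zero] at this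
          exact this.trans_eq (one_div _)
        linarith [hIcc M, mul_le_mul_of_nonneg_left hgeom (Real.sqrt_nonneg (8 * A))]

theorem Real.cos_le_neg_half {x : ℝ} (h₁ : 2 * π / 3 ≤ |x|) (h₂ : |x| ≤ 4 * π / 3) :
    Real.cos x ≤ -(1 / 2) := by
  have h : |(|x| - π)| ≤ π / 3 := abs_le.mpr ⟨by linarith, by linarith⟩
  rw [← Real.cos_abs, ← neg_neg (Real.cos |x|), ← Real.cos_sub_pi, ← Real.cos_abs (|x| - π),
    ← Real.cos_pi_div_three]
  exact neg_le_neg (Real.cos_le_cos_of_nonneg_of_le_pi (abs_nonneg _)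
    (by linarith [Real.pi_pos]) h)

theorem Complex.norm_exp_ofReal_mul_I_sub_one_sq (θ : ℝ) :
    ‖Complex.exp (θ * Complex.I) - 1‖ ^ 2 = 2 - 2 * Real.cos θ := by
  rw [Complex.sq_norm, Complex.exp_mul_I, ← Complex.ofReal_cos, ← Complex.ofReal_sin,
    add_sub_right_comm, ← Complex.ofReal_one, ← Complex.ofReal_sub, Complex.normSq_add_mul_I]
  linear_combination Real.sin_sq_add_cos_sq θ

theorem Function.Periodic.lipschitzWith_lift {E : Type*} [PseudoMetricSpace E] {f : ℝ → E}
    {T : ℝ} {K : ℝ≥0} (hf : Function.Periodic f T) (hlip : LipschitzWith K f) :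
    LipschitzWith K hf.lift := by
  refine LipschitzWith.of_dist_le_mul fun x y => ?_
  induction x using QuotientAddGroup.induction_on with | H x =>
  induction y using QuotientAddGroup.induction_on with | H y =>
  have hdist : dist (x : AddCircle T) y = dist x (y + round (T⁻¹ * (x - y)) * T) := by
    rw [dist_eq_norm, ← AddCircle.coe_sub, AddCircle.norm_eq, Real.dist_eq, sub_add_eq_sub_sub]
  rw [hdist, hf.lift_coe, hf.lift_coe, ← hf.int_mul _ y]
  exact hlip.dist_le_mul _ _

theorem HasSum.subtype_ne {α β : Type*} [AddCommGroup α] [TopologicalSpace α]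
    [IsTopologicalAddGroup α] {f : β → α} {a : α} (hf : HasSum f a) (b : β) :
    HasSum (fun x : {x // x ≠ b} => f x) (a - f b) := by
  classical
  refine (hasSum_subtype_iff_indicator (s := {b}ᶜ) (f := f)).mpr
    ((hasSum_ite_sub_hasSum hf b).congr_fun fun x => ?_)
  simp only [Set.indicator_apply, Set.mem_compl_singleton_iff, ite_not]

section AddCircle

variable {T : ℝ} [hT : Fact (0 < T)]

theorem fourierCoeff_comp_add_right (F : AddCircle T → ℂ) (a : AddCircle T) (n : ℤ) :
    fourierCoeff (fun x => F (x + a)) n = fourier n a * fourierCoeff F n := by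
  have hshift (s : AddCircle T) : fourier (-n) (s - a) = fourier n a * fourier (-n) s := by
    rw [fourier_apply, fourier_apply, fourier_apply, sub_eq_add_neg, smul_add, toCircle_add,
      Circle.coe_mul, neg_smul_neg, mul_comm]
  simp only [fourierCoeff, smul_eq_mul]
  calc ∫ t, fourier (-n) t * F (t + a) ∂haarAddCircle
      = ∫ t, (fun s => fourier (-n) (s - a) * F s) (t + a) ∂haarAddCircle := by
        simp only [add_sub_cancel_right]
    _ = ∫ s, fourier n a * (fourier (-n) s * F s) ∂haarAddCircle := by
        refine (integral_add_right_eq_self (μ := haarAddCircle)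
          (fun s => fourier (-n) (s - a) * F s) a).trans ?_
        simp only [hshift, mul_assoc]
    _ = _ := integral_const_mul _ _

theorem fourierCoeff_comp_add_right_sub {F : AddCircle T → ℂ} (hF : Continuous F)
    (a : AddCircle T) (n : ℤ) :
    fourierCoeff (fun x => F (x + a) - F x) n = (fourier n a - 1) * fourierCoeff F n := by
  have hint {G : AddCircle T → ℂ} (hG : Continuous G) :
      Integrable (fun t => fourier (-n) t • G t) haarAddCircle :=
    (hG.integrable_of_hasCompactSupport (.of_compactSpace G)).fourier_smul (-n)
  rw [sub_mul, one_mul, ← fourierCoeff_comp_add_right]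
  simp only [fourierCoeff, smul_sub]
  exact integral_sub (hint (hF.comp (continuous_add_const a))) (hint hF)

theorem hasSum_sq_fourierCoeff_continuousMap (F : C(AddCircle T, ℂ)) :
    HasSum (fun n => ‖fourierCoeff F n‖ ^ 2) (∫ t, ‖F t‖ ^ 2 ∂haarAddCircle) := by
  have h := hasSum_sq_fourierCoeff (ContinuousMap.toLp (E := ℂ) 2 haarAddCircle ℂ F)
  simp_rw [fourierCoeff_toLp] at h
  convert h using 1
  refine integral_congr_ae ?_
  filter_upwards [ContinuousMap.coeFn_toLp (E := ℂ) (p := 2) (𝕜 := ℂ) haarAddCircle F] with t ht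
  rw [ht]

theorem sum_sq_norm_fourierCoeff_le (F : C(AddCircle T, ℂ)) (s : Finset ℤ) :
    ∑ n ∈ s, ‖fourierCoeff F n‖ ^ 2 ≤ ‖F‖ ^ 2 := by
  refine (sum_le_hasSum s (fun _ _ => sq_nonneg _)
    (hasSum_sq_fourierCoeff_continuousMap F)).trans ?_
  refine (integral_mono_of_nonneg (ae_of_all _ fun _ => sq_nonneg _) (integrable_const (‖F‖ ^ 2))
    (ae_of_all _ fun t => ?_)).trans_eq ?_
  · exact pow_le_pow_left₀ (norm_nonneg _) (F.norm_coe_le_norm t) 2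
  · simp

/-- The shift `T / (3 * 2 ^ m)` puts the phases `2π n h / T` of the whole block into
`[2π/3, 4π/3]`, where `cos ≤ -1/2`. -/
theorem three_le_norm_fourier_sub_one_sq {m : ℕ} {n : ℤ} (hn : n ∈ dyadicBlock m) :
    3 ≤ ‖fourier n ((T / (3 * 2 ^ m) : ℝ) : AddCircle T) - 1‖ ^ 2 := by
  obtain ⟨h₁, h₂⟩ := mem_dyadicBlock.mp hn
  have h₁' : (2 : ℝ) ^ m ≤ |(n : ℝ)| := by rw [← Int.cast_abs]; exact_mod_cast h₁.le
  have h₂' : |(n : ℝ)| ≤ 2 ^ (m + 1) := by rw [← Int.cast_abs]; exact_mod_cast h₂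
  set θ : ℝ := 2 * π * n / (3 * 2 ^ m)
  have hphase : fourier n ((T / (3 * 2 ^ m) : ℝ) : AddCircle T) = Complex.exp (θ * Complex.I) := by
    rw [fourier_coe_apply]
    congr 1
    simp only [θ]
    push_cast
    field_simp [hT.out.ne']
  have habs : |θ| = 2 * π / 3 * (|(n : ℝ)| / 2 ^ m) := by
    rw [abs_div, abs_mul, abs_of_pos (by positivity : (0 : ℝ) < 2 * π),
      abs_of_pos (by positivity : (0 : ℝ) < 3 * 2 ^ m)]
    ring
  have hcos : Real.cos θ ≤ -(1 / 2) := by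
    refine Real.cos_le_neg_half ?_ ?_ <;> rw [habs]
    · rw [le_mul_iff_one_le_right (by positivity), one_le_div (by positivity)]
      exact h₁'
    · have hn : |(n : ℝ)| / 2 ^ m ≤ 2 := by
        rw [div_le_iff₀ (by positivity), ← pow_succ']
        exact h₂'
      calc 2 * π / 3 * (|(n : ℝ)| / 2 ^ m) ≤ 2 * π / 3 * 2 := by gcongr
        _ = 4 * π / 3 := by ring
  rw [hphase, Complex.norm_exp_ofReal_mul_I_sub_one_sq]
  linarith

theorem sum_dyadicBlock_sq_norm_fourierCoeff_le {F : AddCircle T → ℂ} {K : ℝ≥0}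
    (hF : LipschitzWith K F) (m : ℕ) :
    ∑ n ∈ dyadicBlock m, ‖fourierCoeff F n‖ ^ 2 ≤ (K * T) ^ 2 / 4 ^ m := by
  set h : ℝ := T / (3 * 2 ^ m)
  have hh : 0 < h := div_pos hT.out (by positivity)
  have hFc := hF.continuous
  let G : C(AddCircle T, ℂ) := ⟨fun x => F (x + h) - F x, by fun_prop⟩
  have hG : ‖G‖ ≤ K * h := by
    refine (ContinuousMap.norm_le _ (by positivity)).mpr fun x => ?_
    calc ‖F (x + h) - F x‖ = dist (F (x + h)) (F x) := (dist_eq_norm _ _).symm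
      _ ≤ K * dist (x + h) x := hF.dist_le_mul _ _
      _ ≤ K * h := by
        rw [dist_self_add_left]
        gcongr
        exact QuotientAddGroup.norm_mk_le_norm.trans_eq (abs_of_pos hh)
  calc ∑ n ∈ dyadicBlock m, ‖fourierCoeff F n‖ ^ 2
      ≤ ∑ n ∈ dyadicBlock m, ‖fourierCoeff G n‖ ^ 2 / 3 := by
        refine sum_le_sum fun n hn => ?_
        rw [show ⇑G = fun x => F (x + h) - F x from rfl,
          fourierCoeff_comp_add_right_sub hFc, norm_mul, mul_pow]
        nlinarith [three_le_norm_fourier_sub_one_sq (T := T) hn, sq_nonneg ‖fourierCoeff F n‖]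
    _ ≤ (K * h) ^ 2 / 3 := by
        rw [← sum_div]
        gcongr
        exact (sum_sq_norm_fourierCoeff_le G _).trans (pow_le_pow_left₀ (norm_nonneg _) hG 2)
    _ ≤ (K * T) ^ 2 / 4 ^ m := by
        rw [show (4 : ℝ) ^ m = 2 ^ m * 2 ^ m by rw [← mul_pow]; norm_num]
        simp only [h]
        field_simp
        nlinarith [sq_nonneg ((K : ℝ) * T), pow_pos (two_pos (α := ℝ)) m]

theorem summable_norm_fourierCoeff_of_lipschitzWith {F : AddCircle T → ℂ} {K : ℝ≥0}
    (hF : LipschitzWith K F) : Summable fun n => ‖fourierCoeff F n‖ :=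
  summable_of_sum_dyadicBlock_sq_le (fun _ => norm_nonneg _) (sq_nonneg _)
    (sum_dyadicBlock_sq_norm_fourierCoeff_le hF)

theorem sum_range_fourier_coe_mul_div (n : ℤ) {N : ℕ} (hN : N ≠ 0) :
    ∑ j ∈ range N, fourier n ((T * j / N : ℝ) : AddCircle T) =
      if (N : ℤ) ∣ n then (N : ℂ) else 0 := by
  have hζ := Complex.isPrimitiveRoot_exp N hN
  set z := Complex.exp (2 * π * Complex.I / N) ^ n
  have hpow (j : ℕ) : fourier n ((T * j / N : ℝ) : AddCircle T) = z ^ j := by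
    rw [fourier_coe_apply, ← zpow_natCast, ← zpow_mul, ← Complex.exp_int_mul]
    congr 1
    push_cast
    field_simp [hT.out.ne']
  simp_rw [hpow]
  split_ifs with hdvd
  · simp [z, (hζ.zpow_eq_one_iff_dvd n).mpr hdvd]
  · have hz : z ≠ 1 := fun h => hdvd ((hζ.zpow_eq_one_iff_dvd n).mp h)
    have hzN : z ^ N = 1 := by
      rw [← zpow_natCast, ← zpow_mul, mul_comm n, zpow_mul, zpow_natCast, hζ.pow_eq_one, one_zpow]
    rw [geom_sum_eq hz, hzN, sub_self, zero_div]

theorem hasSum_fourierCoeff_mul_natCast {F : C(AddCircle T, ℂ)} (hF : Summable (fourierCoeff F))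
    {N : ℕ} (hN : N ≠ 0) :
    HasSum (fun m : ℤ => fourierCoeff F (m * N))
      ((N : ℂ)⁻¹ * ∑ j ∈ range N, F ((T * j / N : ℝ) : AddCircle T)) := by
  have hgrid : HasSum (fun n : ℤ => (if (N : ℤ) ∣ n then (N : ℂ) else 0) * fourierCoeff F n)
      (∑ j ∈ range N, F ((T * j / N : ℝ) : AddCircle T)) := by
    simp_rw [← sum_range_fourier_coe_mul_div (T := T) _ hN, sum_mul, mul_comm _ (fourierCoeff F _)]
    exact hasSum_sum fun j _ => has_pointwise_sum_fourier_series_of_summable hF _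
  have hN' : (N : ℤ) ≠ 0 := by exact_mod_cast hN
  have hoff : ∀ n ∉ Set.range (· * (N : ℤ)),
      (if (N : ℤ) ∣ n then (N : ℂ) else 0) * fourierCoeff F n = 0 := fun n hn => by
    rw [if_neg fun ⟨m, hm⟩ => hn ⟨m, by rw [hm, mul_comm]⟩, zero_mul]
  have hmul := ((mul_left_injective₀ hN').hasSum_iff hoff).mpr hgrid
  simpa [Function.comp_def, hN] using hmul.mul_left (N : ℂ)⁻¹

end AddCircle

instance fact_zero_lt_two_pi : Fact (0 < 2 * π) := ⟨two_pi_pos⟩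

theorem Function.Periodic.fourierCoeff_lift {f : ℝ → ℂ} (hf : Function.Periodic f (2 * π)) :
    fourierCoeff hf.lift = fourierCoefficient f := by
  ext k
  rw [fourierCoeff_eq_intervalIntegral _ k 0, fourierCoefficient, zero_add, Complex.real_smul]
  push_cast
  congr 1
  refine intervalIntegral.integral_congr fun t _ => ?_
  rw [hf.lift_coe, fourier_coe_apply, smul_eq_mul, mul_comm]
  congr 2
  field_simp
  push_cast
  ring

theorem two_pi_mul_fourierCoefficient_zero (f : ℝ → ℂ) :
    2 * π * fourierCoefficient f 0 = ∫ t in (0 : ℝ)..(2 * π), f t := by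
  have hπ : (π : ℂ) ≠ 0 := Complex.ofReal_ne_zero.mpr pi_ne_zero
  simp only [fourierCoefficient, Int.cast_zero, mul_zero, zero_mul, Complex.exp_zero, mul_one]
  field_simp

/-- For a `2π`-periodic Lipschitz continuous `f`, the `N`-point periodic trapezoidal
rule error satisfies the exact identity `I_N - I = 2π Σ_{j≠0} c_{jN}` for every
`N ≥ 1`, the series converging absolutely. -/
theorem trapezoidal_rule_error_identity
    (f : ℝ → ℂ) (K : NNReal)
    (hper : ∀ t : ℝ, f (t + 2 * π) = f t)
    (hlip : LipschitzWith K f) :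
    ∀ N : ℕ, 1 ≤ N →
      Summable (fun j : {j : ℤ // j ≠ 0} =>
        ‖fourierCoefficient f ((j : ℤ) * N)‖) ∧
      (2 * π / N) * (∑ j ∈ Finset.range N, f (2 * π * j / N)) -
          (∫ t in (0 : ℝ)..(2 * π), f t) =
        2 * π * ∑' j : {j : ℤ // j ≠ 0}, fourierCoefficient f ((j : ℤ) * N) := by
  intro N hN
  have hf : Function.Periodic f (2 * π) := hper
  have hF := hf.lipschitzWith_lift hlip
  have hsum : Summable fun k => ‖fourierCoefficient f k‖ := by
    simpa only [hf.fourierCoeff_lift] using summable_norm_fourierCoeff_of_lipschitzWith hF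
  have hinj : Function.Injective fun j : {j : ℤ // j ≠ 0} => (j : ℤ) * N :=
    fun a b hab => Subtype.ext (mul_right_cancel₀ (by omega) hab)
  refine ⟨hsum.comp_injective hinj, ?_⟩
  have halias := hasSum_fourierCoeff_mul_natCast (F := ⟨hf.lift, hF.continuous⟩) (N := N)
    (by simpa only [ContinuousMap.coe_mk, hf.fourierCoeff_lift] using hsum.of_norm) (by omega)
  simp only [ContinuousMap.coe_mk, hf.fourierCoeff_lift, hf.lift_coe] at halias
  have hnonzero := halias.subtype_ne 0
  rw [zero_mul] at hnonzero
  have hN' : (N : ℂ) ≠ 0 := by norm_cast; omega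
  rw [hnonzero.tsum_eq, ← two_pi_mul_fourierCoefficient_zero]
  field_simp
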